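/- arXiv:2507.13119 — 2 statements merged into one kernel-verified Lean document; each statement's English description precedes it below -/
import Mathlib

section
/- Under the hypotheses of the coupled scattering system (aᵇ = Φ aᶠ + ρ fᵇ, w = Γ v + (1/2) R aᵇ, fᵇ = T v + (1/2)(S-1) aᵇ, fᶠ = t aᶠ + Ψ fᵇ, with M = 1 - (1/2)(S-1)ρ invertible), define Γ̃ = Γ + (1/2) R ρ M⁻¹ T, R̃ = R (Φ + ρ M⁻¹ (1/2)(S-1) Φ), T̃ = Ψ M⁻¹ T, and S̃ = 1 + 2t + Ψ M⁻¹ (S-1) Φ. Then w = Γ̃ v + (1/2) R̃ aᶠ and fᶠ = T̃ v + (1/2)(S̃ - 1) aᶠ. -/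
open Matrix

/-- Effective generalized scattering matrix of an antenna embedded in a
spherical environment: `w = Γ̃ v + (1/2) R̃ aᶠ` and `fᶠ = T̃ v + (1/2)(S̃ - 1) aᶠ`. -/
theorem effective_gsm
    (p n : ℕ)
    (Γ : Matrix (Fin p) (Fin p) ℂ) (R : Matrix (Fin p) (Fin n) ℂ)
    (T : Matrix (Fin n) (Fin p) ℂ)
    (S ρ t Φ Ψ : Matrix (Fin n) (Fin n) ℂ)
    (M : Matrix (Fin n) (Fin n) ℂ)
    (hM : M = 1 - (1/2 : ℂ) • ((S - 1) * ρ))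
    (hMinv : IsUnit M)
    (v w : Fin p → ℂ) (af ab fb ff : Fin n → ℂ)
    (hab : ab = Φ *ᵥ af + ρ *ᵥ fb)
    (hw : w = Γ *ᵥ v + (1/2 : ℂ) • (R *ᵥ ab))
    (hfb : fb = T *ᵥ v + (1/2 : ℂ) • ((S - 1) *ᵥ ab))
    (hff : ff = t *ᵥ af + Ψ *ᵥ fb)
    (Γeff : Matrix (Fin p) (Fin p) ℂ) (Reff : Matrix (Fin p) (Fin n) ℂ)
    (Teff : Matrix (Fin n) (Fin p) ℂ) (Seff : Matrix (Fin n) (Fin n) ℂ)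
    (hΓeff : Γeff = Γ + (1/2 : ℂ) • (R * ρ * M⁻¹ * T))
    (hReff : Reff = R * (Φ + ρ * M⁻¹ * ((1/2 : ℂ) • ((S - 1) * Φ))))
    (hTeff : Teff = Ψ * M⁻¹ * T)
    (hSeff : Seff = 1 + (2 : ℂ) • t + Ψ * M⁻¹ * ((S - 1) * Φ)) :
    w = Γeff *ᵥ v + (1/2 : ℂ) • (Reff *ᵥ af) ∧
      ff = Teff *ᵥ v + (1/2 : ℂ) • ((Seff - 1) *ᵥ af) := by
  have hdet : IsUnit M.det := (Matrix.isUnit_iff_isUnit_det M).mp hMinv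
  have hMfb : M *ᵥ fb = T *ᵥ v + (1/2 : ℂ) • (((S - 1) * Φ) *ᵥ af) := by
    rw [hab] at hfb
    have key : fb = T *ᵥ v + (1/2 : ℂ) • (((S - 1) * Φ) *ᵥ af)
        + (1/2 : ℂ) • (((S - 1) * ρ) *ᵥ fb) := by
      conv_lhs => rw [hfb]
      simp only [Matrix.mulVec_add, smul_add, Matrix.mulVec_mulVec]
      abel
    rw [hM, Matrix.sub_mulVec, Matrix.smul_mulVec, Matrix.one_mulVec]
    set u := ((S - 1) * ρ) *ᵥ fb with hu
    rw [key]
    abel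
  have hfb' : fb = M⁻¹ *ᵥ (T *ᵥ v) + (1/2 : ℂ) • ((M⁻¹ * ((S - 1) * Φ)) *ᵥ af) := by
    have h2 : M⁻¹ *ᵥ (M *ᵥ fb) = fb := by
      rw [Matrix.mulVec_mulVec, Matrix.nonsing_inv_mul M hdet, Matrix.one_mulVec]
    rw [← h2, hMfb]
    simp [Matrix.mulVec_add, Matrix.mulVec_smul, ← Matrix.mulVec_mulVec]
  constructor
  · rw [hw, hab, hfb', hΓeff, hReff]
    simp only [Matrix.add_mulVec, Matrix.sub_mulVec, Matrix.smul_mulVec,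
      Matrix.one_mulVec, Matrix.mulVec_add, Matrix.mulVec_sub, Matrix.mulVec_smul,
      smul_add, smul_sub, ← Matrix.mulVec_mulVec]
    module
  · rw [hff, hfb', hTeff, hSeff]
    simp only [Matrix.add_mulVec, Matrix.sub_mulVec, Matrix.smul_mulVec,
      Matrix.one_mulVec, Matrix.mulVec_add, Matrix.mulVec_sub, Matrix.mulVec_smul,
      smul_add, smul_sub, ← Matrix.mulVec_mulVec]
    module
end

section
/- Suppose the bubble medium equals the free-space medium: k_b = k_f, Z_b = Z_f, μ_b = μ_f, ε_b = ε_f, and r_b, r_a, and the shell functions g, h are shared between the inward and outward problems in such a way that the inward TE transmission coefficient Φ₁ = (g(r_b)/g(r_a)) (√Z_f/√Z_b) (ψ_l(k_f r_a) + t₁ ξ_l(k_f r_a))/ψ_l(k_b r_b) and the outward coefficient Ψ₁ = (g(r_a)/g(r_b)) (√Z_b/√Z_f) (ρ₁ ψ_l(k_b r_b) + ξ_l(k_b r_b))/ξ_l(k_f r_a) are both defined. If additionally the Wronskian-type identity ψ_l'(x) ξ_l(x) − ψ_l(x) ξ_l'(x) = j holds at both x = k_f r_a and x = k_b r_b, and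 t₁, ρ₁ are given by the closed forms in Eqs. (21) and (24) with boundary data g'(r_b)/g(r_b) and g'(r_a)/g(r_a) related by the constancy of the modified Wronskian, then Φ₁ = Ψ₁. -/
/-- Reciprocity `Φ₁ = Ψ₁` of the inward and outward TE transmission coefficients
of a spherical shell when the bubble medium coincides with the exterior medium
(`k_b = k_f`, `Z_b = Z_f`, `μ_b = μ_f`, encoded by using the same `kf, μf` for
both and `sZb = sZf`).  `g1` denotes the inward radial solution (initial data at
`r_b`, Eq. (18)) and `g2` the outward one (initial data at `r_a`, Eq. (23));
their boundary data are related by the constancy of the modified Wronskian.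
`ψa, ξa` are values at `k_f r_a` and `ψb, ξb` at `k_b r_b`, satisfying the
Wronskian identity `ψ' ξ - ψ ξ' = j` at both points;  `t₁, ρ₁` are given by the
closed forms of Eqs. (21) and (24). -/
theorem reciprocity_phi_eq_psi
    (kf μf μpa μpb sZf sZb : ℂ)
    (ψa ψad ξa ξad ψb ψbd ξb ξbd : ℂ)
    (g1b g1bd g1a g1ad g2b g2bd g2a g2ad : ℂ)
    (βa βb t1 ρ1 : ℂ)
    (hkf : kf ≠ 0) (hμf : μf ≠ 0) (hμpa : μpa ≠ 0) (hμpb : μpb ≠ 0)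
    (hψb : ψb ≠ 0) (hξa : ξa ≠ 0)
    (hg1a : g1a ≠ 0) (hg1b : g1b ≠ 0) (hg2a : g2a ≠ 0) (hg2b : g2b ≠ 0)
    (hsZf : sZf ≠ 0) (hsZb : sZb ≠ 0) (hZeq : sZb = sZf)
    (hWa : ψad * ξa - ψa * ξad = Complex.I)
    (hWb : ψbd * ξb - ψb * ξbd = Complex.I)
    (h18 : g1bd / g1b = (kf * μpb / μf) * (ψbd / ψb))
    (h23 : g2ad / g2a = (kf * μpa / μf) * (ξad / ξa))
    (hWron : (g1b * g2bd - g2b * g1bd) / μpb = (g1a * g2ad - g2a * g1ad) / μpa)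
    (hβa : βa = (μf / (kf * μpa)) * (g1ad / g1a))
    (hβb : βb = (μf / (kf * μpb)) * (g2bd / g2b))
    (hdenA : βa * ξa - ξad ≠ 0)
    (hdenB : βb * ψb - ψbd ≠ 0)
    (ht1 : t1 = -((βa * ψa - ψad) / (βa * ξa - ξad)))
    (hρ1 : ρ1 = -((βb * ξb - ξbd) / (βb * ψb - ψbd))) :
    (g1b / g1a) * (sZf / sZb) * ((ψa + t1 * ξa) / ψb)
      = (g2a / g2b) * (sZb / sZf) * ((ρ1 * ψb + ξb) / ξa) := by
  subst hZeq
  have h18' : kf * μpb * g1b * ψbd = μf * ψb * g1bd := by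
    field_simp at h18; linear_combination -h18
  have h23' : kf * μpa * g2a * ξad = μf * ξa * g2ad := by
    field_simp at h23; linear_combination -h23
  have hW' : (g1b*g2bd - g2b*g1bd)*μpa = (g1a*g2ad - g2a*g1ad)*μpb := by
    field_simp at hWron; linear_combination hWron
  have h1 : ψa + t1 * ξa = Complex.I / (βa*ξa - ξad) := by
    rw [ht1]; field_simp; linear_combination hWa
  have h2 : ρ1 * ψb + ξb = -Complex.I / (βb*ψb - ψbd) := by
    rw [hρ1]; field_simp; linear_combination -hWb
  have e1 : βb*ψb - ψbd = μf*ψb*(g1b*g2bd - g2b*g1bd)/(kf*μpb*g1b*g2b) := by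
    rw [hβb]; field_simp; linear_combination (-g2b)*h18'
  have e2 : βa*ξa - ξad = μf*ξa*(g1ad*g2a - g1a*g2ad)/(kf*μpa*g1a*g2a) := by
    rw [hβa]; field_simp; linear_combination (-g1a)*h23'
  have key : g1b * g2b * ξa * (βb*ψb - ψbd) = -(g1a * g2a * ψb * (βa*ξa - ξad)) := by
    rw [e1, e2]; field_simp; linear_combination hW'
  rw [h1, h2]
  have hdenB' : ψb * βb - ψbd ≠ 0 := by rwa [mul_comm] at hdenB
  field_simp
  linear_combination key
end
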